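/- arXiv:1602.04573 — 3 statements merged into one kernel-verified Lean document; each statement's English description precedes it below -/
import Mathlib

section
/- For a nonnegative integer j and complex parameters such that no denominator vanishes, the Pochhammer identity (c-1+i)_j / (b+i)_j = \sum_{k=0}^{j} \frac{(c-b-1)_k}{(b+i+j-k)_k} \cdot \frac{(1)_j}{(1)_k (1)_{j-k}} holds, where i is a nonnegative integer. -/
/-! Splitting `(b+i)_j = (b+i)_{j-k} (b+i+j-k)_k` turns the `k`-th summand into
`C(j,k) (c-b-1)_k (b+i)_{j-k} / (b+i)_j`, so the identity is the Chu–Vandermonde identity for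
rising factorials at `(c-b-1) + (b+i) = c-1+i`. -/

noncomputable def poch (x : ℂ) (k : ℕ) : ℂ := (ascPochhammer ℂ k).eval x

open Finset Polynomial

section CommRing

variable {R : Type*} [CommRing R]

theorem ascPochhammer_eval_eq_neg_one_pow_mul_smeval (x : R) (n : ℕ) :
    (ascPochhammer R n).eval x = (-1) ^ n * (descPochhammer ℤ n).smeval (-x) := by
  rw [← neg_neg x, ascPochhammer_eval_neg_eq_descPochhammer, neg_neg, ← aeval_eq_smeval,
    aeval_def, ← eval_map, descPochhammer_map]

theorem ascPochhammer_eval_add (x y : R) (n : ℕ) :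
    (ascPochhammer R n).eval (x + y) = ∑ p ∈ antidiagonal n,
      n.choose p.1 * ((ascPochhammer R p.1).eval x * (ascPochhammer R p.2).eval y) := by
  rw [ascPochhammer_eval_eq_neg_one_pow_mul_smeval, neg_add,
    Ring.descPochhammer_smeval_add _ (Commute.all _ _), mul_sum]
  refine sum_congr rfl fun p hp => ?_
  rw [ascPochhammer_eval_eq_neg_one_pow_mul_smeval x,
    ascPochhammer_eval_eq_neg_one_pow_mul_smeval y, ← mem_antidiagonal.mp hp, pow_add]
  ring

end CommRing

theorem poch_add (x : ℂ) (m n : ℕ) : poch x (m + n) = poch x m * poch (x + m) n := by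
  rw [poch, poch, poch, ← ascPochhammer_mul, eval_mul, eval_comp, eval_add, eval_X, eval_natCast]

theorem poch_one (n : ℕ) : poch 1 n = n.factorial :=
  ascPochhammer_eval_one ℂ n

theorem poch_add_eq_sum (x y : ℂ) (n : ℕ) :
    poch (x + y) n = ∑ k ∈ range (n + 1), n.choose k * (poch x k * poch y (n - k)) := by
  rw [poch, ascPochhammer_eval_add, Nat.sum_antidiagonal_eq_sum_range_succ_mk]
  rfl

theorem poch_eq_mul_poch_add_sub {k n : ℕ} (hk : k ≤ n) (x : ℂ) :
    poch x n = poch x (n - k) * poch (x + n - k) k := by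
  have h := poch_add x (n - k) k
  rwa [Nat.sub_add_cancel hk, Nat.cast_sub hk, ← add_sub_assoc] at h

theorem poch_div_poch_mul_choose {k n : ℕ} (hk : k ≤ n) (a x : ℂ) (hx : poch x n ≠ 0) :
    poch a k / poch (x + n - k) k * (poch 1 n / (poch 1 k * poch 1 (n - k))) =
      n.choose k * (poch a k * poch x (n - k)) / poch x n := by
  rw [poch_eq_mul_poch_add_sub hk x] at hx ⊢
  obtain ⟨hx₁, hx₂⟩ := mul_ne_zero_iff.mp hx
  rw [poch_one, poch_one, poch_one, Nat.cast_choose ℂ hk]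
  field_simp

theorem stmt2_general (b c : ℂ) (i j : ℕ)
    (hb : poch (b + (i : ℂ)) j ≠ 0) :
    poch (c - 1 + (i : ℂ)) j / poch (b + (i : ℂ)) j =
      ∑ k ∈ Finset.range (j + 1),
        poch (c - b - 1) k / poch (b + (i : ℂ) + (j : ℂ) - (k : ℂ)) k *
          (poch 1 j / (poch 1 k * poch 1 (j - k))) := by
  rw [show c - 1 + (i : ℂ) = (c - b - 1) + (b + i) by ring, poch_add_eq_sum, sum_div]
  exact sum_congr rfl fun k hk =>
    (poch_div_poch_mul_choose (Nat.lt_succ_iff.mp (mem_range.mp hk)) _ _ hb).symm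

theorem stmt2 (b c : ℂ) (i j : ℕ)
    (hb : poch (b + (i : ℂ)) j ≠ 0)
    (hbk : ∀ k : ℕ, k ≤ j → poch (b + (i : ℂ) + (j : ℂ) - (k : ℂ)) k ≠ 0) :
    poch (c - 1 + (i : ℂ)) j / poch (b + (i : ℂ)) j =
      ∑ k ∈ Finset.range (j + 1),
        poch (c - b - 1) k / poch (b + (i : ℂ) + (j : ℂ) - (k : ℂ)) k *
          (poch 1 j / (poch 1 k * poch 1 (j - k))) :=
  stmt2_general b c i j hb
end

section
/- For complex x, y with |x| + |y| < 1 and complex parameters b, c, the identity \sum_{i,j=0}^{\infty} \frac{(c-1+i)_j (b)_{i+j}}{(b+i)_j \, i! \, j!} x^i y^j = (1 - x - y)^{-b} (1 - y)^{b - c + 1} holds, provided b is not a nonpositive integer (so that (b+i)_j \neq 0). -/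
/-!
Since `(b)_{i+j} = (b)_i (b+i)_j`, the `(i, j)` term factors as
`((b)_i x^i / i!) * ((c-1+i)_j y^j / j!)`. Summing over `j` first, the binomial series gives
`(1-y)^{1-c-i}`; summing then over `i` gives `(1-y)^{1-c} (1 - x/(1-y))^{-b}`. Both `1 - y` and
`1 - x/(1-y)` have positive real part, so the principal power splits as
`(1-x-y)^{-b} = (1 - x/(1-y))^{-b} (1-y)^{-b}`. Absolute convergence, needed to sum over `j`
first, comes from running the same computation with `‖b‖`, `‖c-1‖ + i`, `‖x‖`, `‖y‖`.
-/

open Nat Complex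

lemma Ring.choose_add_sub_one_eq_ascPochhammer {K : Type*} [Field K] [CharZero K] (a : K)
    (n : ℕ) : Ring.choose (a + n - 1) n = (ascPochhammer K n).eval a / n ! := by
  rw [Ring.choose_eq_smul, Polynomial.descPochhammer_smeval_eq_ascPochhammer,
    Polynomial.ascPochhammer_smeval_eq_eval, smul_eq_mul]
  ring_nf

lemma ascPochhammer_eval_nonneg {r : ℝ} (hr : 0 ≤ r) (n : ℕ) :
    0 ≤ (ascPochhammer ℝ n).eval r := by
  induction n with
  | zero => simp
  | succ n ih => rw [ascPochhammer_succ_eval]; positivity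

lemma Real.hasSum_ascPochhammer_mul_pow (a : ℝ) {t : ℝ} (ht : |t| < 1) :
    HasSum (fun n ↦ (ascPochhammer ℝ n).eval a / n ! * t ^ n) ((1 - t) ^ (-a)) := by
  have := (Real.one_div_one_sub_rpow_hasFPowerSeriesOnBall_zero a).hasSum
    (y := t) (by simpa [enorm_eq_nnnorm, ← NNReal.coe_lt_coe] using ht)
  simpa [Real.rpow_neg (by linarith [le_abs_self t] : (0 : ℝ) ≤ 1 - t),
    Ring.choose_add_sub_one_eq_ascPochhammer, FormalMultilinearSeries.ofScalars_apply_eq,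
    mul_comm] using this

lemma mul_cpow_of_re_pos {u v : ℂ} (hu : 0 < u.re) (hv : 0 < v.re) (a : ℂ) :
    (u * v) ^ a = u ^ a * v ^ a := by
  have hu0 : u ≠ 0 := fun h ↦ by simp [h] at hu
  have hv0 : v ≠ 0 := fun h ↦ by simp [h] at hv
  have hu' := abs_lt.mp (abs_arg_lt_pi_div_two_iff.mpr (Or.inl hu))
  have hv' := abs_lt.mp (abs_arg_lt_pi_div_two_iff.mpr (Or.inl hv))
  have harg : arg u + arg v ∈ Set.Ioc (-Real.pi) Real.pi := ⟨by linarith, by linarith⟩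
  rw [cpow_def_of_ne_zero (mul_ne_zero hu0 hv0), cpow_def_of_ne_zero hu0,
    cpow_def_of_ne_zero hv0, ← Complex.exp_add, ← add_mul,
    (log_mul_eq_add_log_iff hu0 hv0).mpr harg]

lemma re_one_sub_pos {w : ℂ} (hw : ‖w‖ < 1) : 0 < (1 - w).re := by
  simp only [sub_re, one_re]
  linarith [re_le_norm w]

lemma one_sub_ne_zero_of_norm_lt_one {w : ℂ} (hw : ‖w‖ < 1) : 1 - w ≠ 0 :=
  sub_ne_zero.mpr fun h ↦ by simp [← h] at hw

lemma summable_mul_of_tsum_norm_le {R : Type*} [NormedRing R] [CompleteSpace R]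
    {A : ℕ → R} {B : ℕ → ℕ → R} {g : ℕ → ℝ} (hB : ∀ i, Summable fun j ↦ ‖B i j‖)
    (hg : Summable g) (hle : ∀ i, ‖A i‖ * ∑' j, ‖B i j‖ ≤ g i) :
    Summable fun p : ℕ × ℕ ↦ A p.1 * B p.1 p.2 := by
  have hnorm : Summable fun p : ℕ × ℕ ↦ ‖A p.1‖ * ‖B p.1 p.2‖ := by
    refine (summable_prod_of_nonneg fun p ↦ ?_).mpr ⟨fun i ↦ (hB i).mul_left ‖A i‖, ?_⟩
    · exact mul_nonneg (norm_nonneg _) (norm_nonneg _)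
    refine hg.of_nonneg_of_le (fun i ↦ tsum_nonneg fun j ↦ ?_) fun i ↦ ?_
    · exact mul_nonneg (norm_nonneg _) (norm_nonneg _)
    · simpa only [tsum_mul_left] using hle i
  exact hnorm.of_norm_bounded fun p ↦ norm_mul_le _ _

lemma poch_add_s3 (a : ℂ) (i j : ℕ) : poch a (i + j) = poch a i * poch (a + i) j := by
  simpa [poch, Polynomial.eval_comp] using
    (congrArg (Polynomial.eval a) (ascPochhammer_mul ℂ i j)).symm

lemma poch_ne_zero {a : ℂ} (ha : ∀ m : ℕ, a ≠ -(m : ℂ)) (n : ℕ) : poch a n ≠ 0 := by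
  rw [poch, Ne, ascPochhammer_eval_eq_zero_iff]
  rintro ⟨k, -, hk⟩
  exact ha k (by rw [hk, neg_neg])

lemma norm_poch_le {w : ℂ} {r : ℝ} (hw : ‖w‖ ≤ r) (n : ℕ) :
    ‖poch w n‖ ≤ (ascPochhammer ℝ n).eval r := by
  induction n with
  | zero => simp [poch]
  | succ n ih =>
    rw [poch, ascPochhammer_succ_eval, ascPochhammer_succ_eval, norm_mul]
    have hsucc : ‖w + n‖ ≤ r + n := (norm_add_le _ _).trans (by rw [norm_natCast]; linarith)
    exact mul_le_mul ih hsucc (norm_nonneg _)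
      (ascPochhammer_eval_nonneg ((norm_nonneg w).trans hw) n)

lemma hasSum_poch_mul_pow (a : ℂ) {z : ℂ} (hz : ‖z‖ < 1) :
    HasSum (fun n ↦ poch a n / n ! * z ^ n) ((1 - z) ^ (-a)) := by
  have := (one_div_one_sub_cpow_hasFPowerSeriesOnBall_zero a).hasSum
    (y := z) (by simpa [enorm_eq_nnnorm, ← NNReal.coe_lt_coe] using hz)
  simpa [cpow_neg, poch, Ring.choose_add_sub_one_eq_ascPochhammer,
    FormalMultilinearSeries.ofScalars_apply_eq, mul_comm] using this

lemma norm_poch_mul_pow_le {w : ℂ} {r : ℝ} (hw : ‖w‖ ≤ r) (z : ℂ) (n : ℕ) :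
    ‖poch w n / n ! * z ^ n‖ ≤ (ascPochhammer ℝ n).eval r / n ! * ‖z‖ ^ n := by
  rw [norm_mul, norm_div, norm_pow, norm_natCast]
  gcongr
  exact norm_poch_le hw n

lemma summable_norm_poch_mul_pow (w : ℂ) {z : ℂ} (hz : ‖z‖ < 1) :
    Summable fun n ↦ ‖poch w n / n ! * z ^ n‖ :=
  (Real.hasSum_ascPochhammer_mul_pow ‖w‖ (t := ‖z‖) (by rwa [abs_norm])).summable.of_nonneg_of_le
    (fun _ ↦ norm_nonneg _) (norm_poch_mul_pow_le le_rfl z)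

lemma tsum_norm_poch_mul_pow_le {w z : ℂ} {r : ℝ} (hw : ‖w‖ ≤ r) (hz : ‖z‖ < 1) :
    ∑' n, ‖poch w n / n ! * z ^ n‖ ≤ (1 - ‖z‖) ^ (-r) := by
  have hmaj := Real.hasSum_ascPochhammer_mul_pow r (t := ‖z‖) (by rwa [abs_norm])
  exact hmaj.tsum_eq ▸ (summable_norm_poch_mul_pow w hz).tsum_le_tsum
    (norm_poch_mul_pow_le hw z) hmaj.summable

lemma norm_div_one_sub_lt_one {x y : ℂ} (hxy : ‖x‖ + ‖y‖ < 1) : ‖x / (1 - y)‖ < 1 := by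
  have : 1 - ‖y‖ ≤ ‖1 - y‖ := by simpa using norm_sub_norm_le (1 : ℂ) y
  rw [norm_div, div_lt_one (by linarith [norm_nonneg x])]
  linarith

lemma one_sub_sub_cpow {x y : ℂ} (hxy : ‖x‖ + ‖y‖ < 1) (a : ℂ) :
    (1 - x - y) ^ a = (1 - x / (1 - y)) ^ a * (1 - y) ^ a := by
  have hy : ‖y‖ < 1 := by linarith [norm_nonneg x]
  have hy0 := one_sub_ne_zero_of_norm_lt_one hy
  rw [← mul_cpow_of_re_pos (re_one_sub_pos (norm_div_one_sub_lt_one hxy)) (re_one_sub_pos hy)]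
  congr 1
  field_simp
  ring

lemma tsum_poch_add_natCast_mul_pow (a : ℂ) {z : ℂ} (hz : ‖z‖ < 1) (i : ℕ) :
    ∑' n, poch (a + i) n / n ! * z ^ n = (1 - z) ^ (-a) / (1 - z) ^ i := by
  rw [(hasSum_poch_mul_pow _ hz).tsum_eq, neg_add,
    cpow_add _ _ (one_sub_ne_zero_of_norm_lt_one hz), cpow_neg _ (i : ℂ), cpow_natCast,
    div_eq_mul_inv]

lemma hypergeometric_term_eq {b : ℂ} (c x y : ℂ) (hb : ∀ m : ℕ, b ≠ -(m : ℂ)) (i j : ℕ) :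
    poch (c - 1 + i) j * poch b (i + j) / (poch (b + i) j * i ! * j !) * x ^ i * y ^ j =
      poch b i / i ! * x ^ i * (poch (c - 1 + i) j / j ! * y ^ j) := by
  have := poch_ne_zero (a := b + i) (fun m h ↦ hb (i + m) (by push_cast; linear_combination h)) j
  rw [poch_add_s3]
  field_simp

lemma summable_hypergeometric_term (b c : ℂ) {x y : ℂ} (hxy : ‖x‖ + ‖y‖ < 1) :
    Summable fun p : ℕ × ℕ ↦
      poch b p.1 / p.1 ! * x ^ p.1 * (poch (c - 1 + p.1) p.2 / p.2 ! * y ^ p.2) := by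
  set t := ‖y‖
  have hy : t < 1 := by linarith [norm_nonneg x]
  have ht : 0 < 1 - t := by linarith
  have hr : |‖x‖ / (1 - t)| < 1 := by
    rw [abs_of_nonneg (by positivity), div_lt_one ht]; linarith
  have hc (i : ℕ) : ‖c - 1 + i‖ ≤ ‖c - 1‖ + i := by
    simpa using norm_add_le (c - 1) (i : ℂ)
  refine summable_mul_of_tsum_norm_le (A := fun i ↦ poch b i / i ! * x ^ i)
    (B := fun i j ↦ poch (c - 1 + i) j / j ! * y ^ j)
    (fun i ↦ summable_norm_poch_mul_pow _ hy)
    (((Real.hasSum_ascPochhammer_mul_pow ‖b‖ hr).summable).mul_left ((1 - t) ^ (-‖c - 1‖)))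
    fun i ↦ ?_
  calc _ ≤ (ascPochhammer ℝ i).eval ‖b‖ / i ! * ‖x‖ ^ i * (1 - t) ^ (-(‖c - 1‖ + i)) :=
        mul_le_mul (norm_poch_mul_pow_le le_rfl x i)
          (tsum_norm_poch_mul_pow_le (hc i) hy)
          (tsum_nonneg fun _ ↦ norm_nonneg _)
          (by have := ascPochhammer_eval_nonneg (norm_nonneg b) i; positivity)
    _ = _ := by
      rw [neg_add, Real.rpow_add ht, Real.rpow_neg ht.le (i : ℝ), Real.rpow_natCast, div_pow]
      field_simp

theorem stmt3 (b c : ℂ) (hb : ∀ m : ℕ, b ≠ -(m : ℂ)) (x y : ℂ)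
    (h : ‖x‖ + ‖y‖ < 1) :
    ∑' p : ℕ × ℕ,
        poch (c - 1 + (p.1 : ℂ)) p.2 * poch b (p.1 + p.2) /
            (poch (b + (p.1 : ℂ)) p.2 * (p.1.factorial : ℂ) * (p.2.factorial : ℂ)) *
          x ^ p.1 * y ^ p.2
      = (1 - x - y) ^ (-b) * (1 - y) ^ (b - c + 1) := by
  have hy : ‖y‖ < 1 := by linarith [norm_nonneg x]
  have hy0 := one_sub_ne_zero_of_norm_lt_one hy
  have hs := summable_hypergeometric_term b c h
  calc _ = ∑' i, poch b i / i ! * x ^ i * ∑' j, poch (c - 1 + i) j / j ! * y ^ j := by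
        simp_rw [hypergeometric_term_eq c x y hb, hs.tsum_prod' hs.prod_factor, tsum_mul_left]
    _ = ∑' i, (1 - y) ^ (-(c - 1)) * (poch b i / i ! * (x / (1 - y)) ^ i) := by
        congr! 2 with i
        rw [tsum_poch_add_natCast_mul_pow _ hy, div_pow]
        ring
    _ = _ := by
      rw [tsum_mul_left, (hasSum_poch_mul_pow b (norm_div_one_sub_lt_one h)).tsum_eq,
        one_sub_sub_cpow h, show b - c + 1 = -(c - 1) + b by ring, cpow_add _ _ hy0]
      have hcancel : (1 - y) ^ (-b) * (1 - y) ^ b = 1 := by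
        rw [← cpow_add _ _ hy0, neg_add_cancel, cpow_zero]
      linear_combination -((1 - y) ^ (-(c - 1)) * (1 - x / (1 - y)) ^ (-b)) * hcancel
end

section
/- For complex x, y with |x| + |y| < 1 and any complex number a, the double binomial series identity \sum_{i,j=0}^{\infty} \frac{(a)_{i+j}}{i! \, j!} x^i y^j = (1 - x - y)^{-a} holds, where the power is the principal branch. -/
/-!
Grouping the terms along the antidiagonals `i + j = n` turns the double series into the
binomial series `∑ₙ (a)ₙ / n! (x + y)ⁿ = (1 - (x + y))^(-a)` by the binomial theorem. The
regrouping is justified by absolute convergence: the antidiagonal sums of the norms are the terms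
`‖(a)ₙ‖ / n! (‖x‖ + ‖y‖)ⁿ`, summable because `‖x‖ + ‖y‖` lies inside the unit disc of convergence.
-/

open Finset

theorem hasSum_of_summable_sum_norm_antidiagonal {E : Type*} [NormedAddCommGroup E]
    [CompleteSpace E] {f : ℕ × ℕ → E} {s : E}
    (hnorm : Summable fun n ↦ ∑ p ∈ antidiagonal n, ‖f p‖)
    (hs : HasSum (fun n ↦ ∑ p ∈ antidiagonal n, f p) s) : HasSum f s := by
  have hf : Summable f := by
    refine .of_norm ?_
    rw [← HasAntidiagonal.sigmaAntidiagonalEquivProd.summable_iff]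
    refine (summable_sigma_of_nonneg fun _ ↦ norm_nonneg _).2 ⟨fun _ ↦ .of_finite, ?_⟩
    simpa [tsum_fintype, ← sum_coe_sort (antidiagonal _)] using hnorm
  have hregroup : HasSum (fun n ↦ ∑ p ∈ antidiagonal n, f p) (∑' p, f p) := by
    have := HasAntidiagonal.sigmaAntidiagonalEquivProd.hasSum_iff.2 hf.hasSum
    simpa [← sum_coe_sort (antidiagonal _)] using this.sigma fun n ↦ hasSum_fintype _
  exact hs.unique hregroup ▸ hf.hasSum

theorem sum_antidiagonal_div_factorial_mul_pow_mul_pow {K : Type*} [Field K] [CharZero K]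
    (q u v : K) (n : ℕ) :
    ∑ p ∈ antidiagonal n, q / (p.1.factorial * p.2.factorial) * u ^ p.1 * v ^ p.2 =
      q / n.factorial * (u + v) ^ n := by
  rw [(Commute.all u v).add_pow', mul_sum]
  refine sum_congr rfl fun p hp ↦ ?_
  rw [← mem_antidiagonal.mp hp, nsmul_eq_mul, Nat.cast_add_choose]
  have := (p.1 + p.2).factorial_ne_zero
  field_simp

theorem hasSum_div_factorial_mul_pow_mul_pow {𝕜 : Type*} [RCLike 𝕜] (d : ℕ → 𝕜) {x y s : 𝕜}
    (habs : Summable fun n ↦ ‖d n / n.factorial‖ * (‖x‖ + ‖y‖) ^ n)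
    (hs : HasSum (fun n ↦ d n / n.factorial * (x + y) ^ n) s) :
    HasSum (fun p : ℕ × ℕ ↦
      d (p.1 + p.2) / (p.1.factorial * p.2.factorial) * x ^ p.1 * y ^ p.2) s := by
  refine hasSum_of_summable_sum_norm_antidiagonal ?_ ?_
  · refine habs.congr fun n ↦ ?_
    rw [norm_div, RCLike.norm_natCast, ← sum_antidiagonal_div_factorial_mul_pow_mul_pow]
    refine sum_congr rfl fun p hp ↦ ?_
    simp [← mem_antidiagonal.mp hp]
  · refine hs.congr_fun fun n ↦ ?_
    rw [← sum_antidiagonal_div_factorial_mul_pow_mul_pow]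
    refine sum_congr rfl fun p hp ↦ ?_
    rw [mem_antidiagonal.mp hp]

theorem poch_div_factorial_eq_multichoose (a : ℂ) (n : ℕ) :
    poch a n / n.factorial = Ring.multichoose a n := by
  rw [div_eq_iff (by exact_mod_cast n.factorial_ne_zero), mul_comm, ← nsmul_eq_mul,
    Ring.factorial_nsmul_multichoose_eq_ascPochhammer, Polynomial.ascPochhammer_smeval_eq_eval,
    poch]

theorem hasFPowerSeriesOnBall_one_sub_cpow_neg (a : ℂ) :
    HasFPowerSeriesOnBall (fun z ↦ (1 - z) ^ (-a))
      (.ofScalars ℂ fun n ↦ poch a n / n.factorial) 0 1 := by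
  have hcoeff : (fun n : ℕ ↦ poch a n / n.factorial) =
      fun n : ℕ ↦ Ring.choose (a + (n : ℂ) - 1) n := by
    ext n
    rw [poch_div_factorial_eq_multichoose, Ring.multichoose_eq]
  simpa [hcoeff, Complex.cpow_neg] using Complex.one_div_one_sub_cpow_hasFPowerSeriesOnBall_zero a

theorem hasSum_poch_div_factorial_mul_pow (a : ℂ) {z : ℂ} (hz : ‖z‖ < 1) :
    HasSum (fun n ↦ poch a n / n.factorial * z ^ n) ((1 - z) ^ (-a)) := by
  have := (hasFPowerSeriesOnBall_one_sub_cpow_neg a).hasSum (y := z)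
    (by rw [← ENNReal.ofReal_one, Metric.eball_ofReal]; simpa using hz)
  simpa [FormalMultilinearSeries.ofScalars_apply_eq, mul_comm] using this

theorem summable_norm_poch_div_factorial_mul_pow (a : ℂ) {r : ℝ} (hr0 : 0 ≤ r) (hr : r < 1) :
    Summable fun n ↦ ‖poch a n / n.factorial‖ * r ^ n := by
  lift r to NNReal using hr0
  have hradius := (hasFPowerSeriesOnBall_one_sub_cpow_neg a).r_le
  have := FormalMultilinearSeries.summable_norm_mul_pow _
    ((ENNReal.coe_lt_one_iff.2 (mod_cast hr)).trans_le hradius)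
  simpa [FormalMultilinearSeries.ofScalars_norm] using this

theorem stmt4 (a x y : ℂ) (h : ‖x‖ + ‖y‖ < 1) :
    ∑' p : ℕ × ℕ,
        poch a (p.1 + p.2) / ((p.1.factorial : ℂ) * (p.2.factorial : ℂ)) * x ^ p.1 * y ^ p.2
      = (1 - x - y) ^ (-a) := by
  have hxy : ‖x + y‖ < 1 := (norm_add_le x y).trans_lt h
  rw [sub_sub]
  exact (hasSum_div_factorial_mul_pow_mul_pow (poch a)
    (summable_norm_poch_div_factorial_mul_pow a (by positivity) h)
    (hasSum_poch_div_factorial_mul_pow a hxy)).tsum_eq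
end
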